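/- arXiv:1206.0961 — 5 statements merged into one kernel-verified Lean document; each statement's English description precedes it below -/
import Mathlib

section
/- Let $T>0$, $K_1\ge 0$, let $b:\mathbb{R}^d\to\mathbb{R}^d$ satisfy $|b(u)-b(v)|\le K_1|u-v|$ for all $u,v$, let $g:[0,T]\to\mathbb{R}^d$ be continuous with $g(0)=0$, and let $X:[0,T]\to\mathbb{R}^d$ be continuous with $X_t = x + \int_0^t b(X_s)\,ds + g(t)$ for all $t\in[0,T]$. Then for all $s,t\in[0,T]$, $|X_t - X_s| \le d_1|t-s| + d_2\|g\|_\infty|t-s| + |g(t)-g(s)|$, where $d_1 = K_1e^{K_1T}|x| + (1+K_1Te^{K_1T})(K_1|x|+|b(x)|)$ and $d_2 = K_1e^{K_1T}$. -/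
open MeasureTheory Set

/-- The sup norm `‖f‖_∞ = sup_{0 ≤ t ≤ T} ‖f t‖` of a path on `[0,T]`. -/
noncomputable def supN {E : Type*} [NormedAddCommGroup E] (T : ℝ) (f : ℝ → E) : ℝ :=
  ⨆ t : Icc (0:ℝ) T, ‖f (t : ℝ)‖

/-!
The Lipschitz bound gives linear growth, `‖b u‖ ≤ ‖b x‖ + K‖x‖ + K‖u‖`, so the integral equation
yields `‖X_t‖ ≤ A + K ∫₀ᵗ ‖X_s‖ ds` with `A = (1 + KT)‖x‖ + T‖b x‖ + ‖g‖_∞`, and Grönwall's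
inequality gives `‖X‖_∞ ≤ A e^{KT}`. Consequently `‖b (X_u)‖ ≤ M := ‖b x‖ + K‖x‖ + K A e^{KT}`
on `[0,T]`, and `X_t - X_s = ∫ₛᵗ b(X_u) du + g(t) - g(s)` gives
`‖X_t - X_s‖ ≤ M|t - s| + ‖g(t) - g(s)‖`; expanding `M` yields `d₁ + d₂‖g‖_∞`.
-/

open intervalIntegral Filter Topology

theorem norm_apply_le_of_norm_sub_le {E F : Type*} [SeminormedAddCommGroup E]
    [SeminormedAddCommGroup F] {b : E → F} {K : ℝ} (hK : 0 ≤ K)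
    (hb : ∀ u v, ‖b u - b v‖ ≤ K * ‖u - v‖) (x u : E) :
    ‖b u‖ ≤ ‖b x‖ + K * ‖x‖ + K * ‖u‖ :=
  calc ‖b u‖ ≤ ‖b x‖ + ‖b u - b x‖ := norm_le_insert' _ _
    _ ≤ ‖b x‖ + K * (‖u‖ + ‖x‖) := by grw [hb u x, norm_sub_le u x]
    _ = ‖b x‖ + K * ‖x‖ + K * ‖u‖ := by ring

theorem hasDerivWithinAt_integral_Ici_of_continuousOn {E : Type*} [NormedAddCommGroup E]
    [NormedSpace ℝ E] [CompleteSpace E] {f : ℝ → E} {a b t : ℝ} (hf : ContinuousOn f (Icc a b))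
    (ht : t ∈ Ico a b) :
    HasDerivWithinAt (fun u => ∫ s in a..u, f s) (f t) (Ici t) t := by
  have hnhds : Icc a b ∈ 𝓝[>] t := Icc_mem_nhdsGT_of_mem ht
  refine integral_hasDerivWithinAt_right ?_ ?_ ?_
  · exact (hf.mono (uIcc_subset_Icc (left_mem_Icc.2 (ht.1.trans ht.2.le))
      (Ico_subset_Icc_self ht))).intervalIntegrable
  · exact (hf.stronglyMeasurableAtFilter_nhdsWithin measurableSet_Icc t).filter_mono
      (nhdsWithin_le_of_mem hnhds)
  · exact (hf t (Ico_subset_Icc_self ht)).mono_of_mem_nhdsWithin hnhds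

theorem le_mul_exp_of_le_add_mul_integral {f : ℝ → ℝ} {a b A K : ℝ} (hK : 0 ≤ K)
    (hf : ContinuousOn f (Icc a b)) (h : ∀ t ∈ Icc a b, f t ≤ A + K * ∫ s in a..t, f s) :
    ∀ t ∈ Icc a b, f t ≤ A * Real.exp (K * (t - a)) := by
  intro t ht
  have hab : a ≤ b := ht.1.trans ht.2
  -- `ψ` dominates `f` and has right derivative `K f ≤ K ψ`: apply differential Grönwall to `ψ`.
  set ψ : ℝ → ℝ := fun u => A + K * ∫ s in a..u, f s
  have hψ : ∀ u ∈ Icc a b, ψ u ≤ gronwallBound A K 0 (u - a) := by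
    refine le_gronwallBound_of_liminf_deriv_right_le (f' := fun u => K * f u) ?_
      (fun u hu r hr => (((hasDerivWithinAt_integral_Ici_of_continuousOn hf hu).const_mul K
        ).const_add A).liminf_right_slope_le hr)
      (by simp [ψ]) fun u hu => by
        simpa using mul_le_mul_of_nonneg_left (h u (Ico_subset_Icc_self hu)) hK
    rw [← uIcc_of_le hab] at hf ⊢
    exact ((continuousOn_primitive_interval (hf.integrableOn_compact isCompact_uIcc)).const_smul
      K).const_add A
  simpa [gronwallBound_ε0] using (h t ht).trans (hψ t ht)

theorem norm_le_supN {E : Type*} [NormedAddCommGroup E] {T t : ℝ} {g : ℝ → E}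
    (hg : ContinuousOn g (Icc 0 T)) (ht : t ∈ Icc 0 T) : ‖g t‖ ≤ supN T g := by
  have hbdd := isCompact_Icc.bddAbove_image hg.norm
  rw [image_eq_range] at hbdd
  exact le_ciSup hbdd ⟨t, ht⟩

theorem supN_nonneg {E : Type*} [NormedAddCommGroup E] (T : ℝ) (g : ℝ → E) : 0 ≤ supN T g :=
  Real.iSup_nonneg fun _ => norm_nonneg _

section IntegralEquation

variable {E : Type*} [NormedAddCommGroup E] [NormedSpace ℝ E] {T K : ℝ} {b : E → E}
  {g X : ℝ → E} {x : E}

theorem norm_le_mul_exp_of_eq_add_integral (hK : 0 ≤ K)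
    (hb : ∀ u v, ‖b u - b v‖ ≤ K * ‖u - v‖) (hg : ContinuousOn g (Icc 0 T))
    (hX : ContinuousOn X (Icc 0 T))
    (hXeq : ∀ t ∈ Icc (0:ℝ) T, X t = x + (∫ s in (0:ℝ)..t, b (X s)) + g t) {t : ℝ}
    (ht : t ∈ Icc 0 T) :
    ‖X t‖ ≤ ((1 + K * T) * ‖x‖ + T * ‖b x‖ + supN T g) * Real.exp (K * T) := by
  set A := (1 + K * T) * ‖x‖ + T * ‖b x‖ + supN T g
  have hA : 0 ≤ A := by have := ht.1.trans ht.2; have := supN_nonneg T g; positivity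
  have hint : ∀ r ∈ Icc 0 T, ‖X r‖ ≤ A + K * ∫ s in (0:ℝ)..r, ‖X s‖ := by
    intro r hr
    have hXint : IntervalIntegrable (fun s => ‖X s‖) volume 0 r :=
      (hX.norm.mono (uIcc_subset_Icc (left_mem_Icc.2 (hr.1.trans hr.2)) hr)).intervalIntegrable
    calc ‖X r‖ ≤ ‖x‖ + ‖∫ s in (0:ℝ)..r, b (X s)‖ + ‖g r‖ := hXeq r hr ▸ norm_add₃_le
      _ ≤ ‖x‖ + (∫ s in (0:ℝ)..r, (‖b x‖ + K * ‖x‖) + K * ‖X s‖) + supN T g := by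
          gcongr
          · exact norm_integral_le_of_norm_le hr.1
              (ae_of_all _ fun s _ => norm_apply_le_of_norm_sub_le hK hb x (X s))
              (intervalIntegrable_const.add (hXint.const_mul K))
          · exact norm_le_supN hg hr
      _ = ‖x‖ + (‖b x‖ + K * ‖x‖) * r + K * (∫ s in (0:ℝ)..r, ‖X s‖) + supN T g := by
          rw [integral_add intervalIntegrable_const (hXint.const_mul K),
            intervalIntegral.integral_const, intervalIntegral.integral_const_mul, smul_eq_mul,
            sub_zero]
          ring
      _ ≤ A + K * ∫ s in (0:ℝ)..r, ‖X s‖ := by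
          have := mul_le_mul_of_nonneg_left hr.2 (by positivity : 0 ≤ ‖b x‖ + K * ‖x‖)
          linarith
  calc ‖X t‖ ≤ A * Real.exp (K * (t - 0)) := le_mul_exp_of_le_add_mul_integral hK hX.norm hint t ht
    _ ≤ A * Real.exp (K * T) := by gcongr; linarith [ht.2]

theorem norm_sub_le_of_eq_add_integral (hb : Continuous b) (hX : ContinuousOn X (Icc 0 T))
    (hXeq : ∀ t ∈ Icc (0:ℝ) T, X t = x + (∫ s in (0:ℝ)..t, b (X s)) + g t) {M : ℝ}
    (hM : ∀ u ∈ Icc 0 T, ‖b (X u)‖ ≤ M) {s t : ℝ} (hs : s ∈ Icc 0 T) (ht : t ∈ Icc 0 T) :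
    ‖X t - X s‖ ≤ M * |t - s| + ‖g t - g s‖ := by
  have hbX := hb.comp_continuousOn hX
  have hint : ∀ r ∈ Icc 0 T, IntervalIntegrable (fun u => b (X u)) volume 0 r := fun r hr =>
    (hbX.mono (uIcc_subset_Icc (left_mem_Icc.2 (hr.1.trans hr.2)) hr)).intervalIntegrable
  have hdiff : X t - X s = (∫ u in s..t, b (X u)) + (g t - g s) := by
    rw [hXeq t ht, hXeq s hs, ← integral_interval_sub_left (hint t ht) (hint s hs)]
    abel
  calc ‖X t - X s‖ ≤ ‖∫ u in s..t, b (X u)‖ + ‖g t - g s‖ := hdiff ▸ norm_add_le _ _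
    _ ≤ M * |t - s| + ‖g t - g s‖ := by
        gcongr
        exact norm_integral_le_of_norm_le_const fun u hu =>
          hM u (uIoc_subset_uIcc.trans (uIcc_subset_Icc hs ht) hu)

end IntegralEquation

theorem stmt_2_general {d : ℕ} (T : ℝ) (K₁ : ℝ) (hK₁ : 0 ≤ K₁)
    (b : EuclideanSpace ℝ (Fin d) → EuclideanSpace ℝ (Fin d))
    (hb : ∀ u v, ‖b u - b v‖ ≤ K₁ * ‖u - v‖)
    (g : ℝ → EuclideanSpace ℝ (Fin d))
    (hg : ContinuousOn g (Icc 0 T))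
    (x : EuclideanSpace ℝ (Fin d))
    (X : ℝ → EuclideanSpace ℝ (Fin d))
    (hX : ContinuousOn X (Icc 0 T))
    (hXeq : ∀ t ∈ Icc (0:ℝ) T, X t = x + (∫ s in (0:ℝ)..t, b (X s)) + g t) :
    ∀ s ∈ Icc (0:ℝ) T, ∀ t ∈ Icc (0:ℝ) T,
      ‖X t - X s‖ ≤
        (K₁ * Real.exp (K₁ * T) * ‖x‖
            + (1 + K₁ * T * Real.exp (K₁ * T)) * (K₁ * ‖x‖ + ‖b x‖)) * |t - s|
        + (K₁ * Real.exp (K₁ * T)) * supN T g * |t - s|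
        + ‖g t - g s‖ := by
  intro s hs t ht
  have hbc : Continuous b :=
    (LipschitzWith.of_dist_le' fun u v => by simpa only [dist_eq_norm] using hb u v).continuous
  have hbX : ∀ u ∈ Icc 0 T, ‖b (X u)‖ ≤ ‖b x‖ + K₁ * ‖x‖
      + K₁ * (((1 + K₁ * T) * ‖x‖ + T * ‖b x‖ + supN T g) * Real.exp (K₁ * T)) := fun u hu =>
    (norm_apply_le_of_norm_sub_le hK₁ hb x (X u)).trans <| by
      gcongr; exact norm_le_mul_exp_of_eq_add_integral hK₁ hb hg hX hXeq hu
  refine (norm_sub_le_of_eq_add_integral hbc hX hXeq hbX hs ht).trans_eq ?_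
  ring

/-- Modulus-of-continuity estimate (3.3):
`|X_t - X_s| ≤ d₁|t-s| + d₂‖g‖_∞|t-s| + |g(t)-g(s)|` with
`d₁ = K₁ e^{K₁T}|x| + (1+K₁T e^{K₁T})(K₁|x|+|b(x)|)` and `d₂ = K₁ e^{K₁T}`,
for the solution of `X_t = x + ∫_0^t b(X_s) ds + g(t)`. -/
theorem stmt_2 {d : ℕ} (T : ℝ) (hT : 0 < T) (K₁ : ℝ) (hK₁ : 0 ≤ K₁)
    (b : EuclideanSpace ℝ (Fin d) → EuclideanSpace ℝ (Fin d))
    (hb : ∀ u v, ‖b u - b v‖ ≤ K₁ * ‖u - v‖)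
    (g : ℝ → EuclideanSpace ℝ (Fin d))
    (hg : ContinuousOn g (Icc 0 T)) (hg0 : g 0 = 0)
    (x : EuclideanSpace ℝ (Fin d))
    (X : ℝ → EuclideanSpace ℝ (Fin d))
    (hX : ContinuousOn X (Icc 0 T))
    (hXeq : ∀ t ∈ Icc (0:ℝ) T, X t = x + (∫ s in (0:ℝ)..t, b (X s)) + g t) :
    ∀ s ∈ Icc (0:ℝ) T, ∀ t ∈ Icc (0:ℝ) T,
      ‖X t - X s‖ ≤
        (K₁ * Real.exp (K₁ * T) * ‖x‖
            + (1 + K₁ * T * Real.exp (K₁ * T)) * (K₁ * ‖x‖ + ‖b x‖)) * |t - s|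
        + (K₁ * Real.exp (K₁ * T)) * supN T g * |t - s|
        + ‖g t - g s‖ :=
  stmt_2_general T K₁ hK₁ b hb g hg x X hX hXeq
end

section
/- Let $T>0$, $H\in(\frac{1}{2},1)$, $\delta\in(0,\frac{1}{2})$ with $\delta < H$, $\epsilon>0$, $y\in\mathbb{R}$, $K_1,K_2,d_1,d_2\ge 0$. Let $b:\mathbb{R}\to\mathbb{R}$ be differentiable with $|b'|\le K_1$ and $|b'(u)-b'(v)|\le K_2|u-v|$ for all $u,v$. Let $B:[0,T]\to\mathbb{R}$ be continuous with $B(0)=0$ and finite $(H-\delta)$-H\"older seminorm $\|B\|_{H-\delta}$, and let $X:[0,T]\to\mathbb{R}$ satisfy $|X_t-X_s| \le d_1|t-s| + d_2\|B\|_\infty|t-s| + |B_t-B_s|$ for all $s,t\in[0,T]$. Set $X^\epsilon_t = X_t + \frac{T-t}{T}\epsilon y$ and $\eta_t = b(X_t)-b(X^\epsilon_t)-\frac{\epsilon}{T}y$. Then for every $s\in[0,T]$, $\Big|\int_0^s \frac{\eta_s-\eta_r}{(s-r)^{\frac{1}{2}+H}}\,dr\Big| \le \frac{Td_1K_2+K_2|y|\epsilon+K_1}{(\frac{3}{2}-H)T}\,|y|\epsilon\,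 s^{\frac{3}{2}-H} + \frac{d_2K_2}{\frac{3}{2}-H}\,|y|\epsilon\,\|B\|_\infty\, s^{\frac{3}{2}-H} + \frac{K_2}{\frac{1}{2}-\delta}\,|y|\epsilon\, s^{\frac{1}{2}-\delta}\,\|B\|_{H-\delta}$. -/
open MeasureTheory Set

/-- The `λ`-Hölder seminorm `‖f‖_λ = sup_{0 ≤ s < t ≤ T} |f t - f s| / (t-s)^λ` of a path on
`[0,T]` (the diagonal pairs contribute `0/0 = 0`, so the supremum is unchanged). -/
noncomputable def holderN {E : Type*} [NormedAddCommGroup E] (T lam : ℝ) (f : ℝ → E) : ℝ :=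
  ⨆ p : Icc (0:ℝ) T × Icc (0:ℝ) T, ‖f (p.2 : ℝ) - f (p.1 : ℝ)‖ / |(p.2 : ℝ) - (p.1 : ℝ)| ^ lam

/-!
Write `c t = ((T - t) / T) ε y`, so that `η s - η r` is minus the difference of the increments
`b (X s + c s) - b (X s)` and `b (X r + c r) - b (X r)`. Since `b` is `K₁`-Lipschitz and `b'` is
`K₂`-Lipschitz, this is at most `K₁ |c s - c r| + K₂ |c r| |X s - X r|`, and the assumption on `X`
together with the Hölder bound on `B` gives `|η s - η r| ≤ A (s - r) + C (s - r)^(H - δ)`.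
Dividing by `(s - r)^(1/2 + H)` leaves two integrable singularities, of orders `H - 1/2 < 1` and
`1/2 + δ < 1`, whose integrals over `[0, s]` are explicit.
-/

lemma holderN_nonneg {E : Type*} [NormedAddCommGroup E] (T lam : ℝ) (f : ℝ → E) :
    0 ≤ holderN T lam f :=
  Real.iSup_nonneg fun _ => div_nonneg (norm_nonneg _) (Real.rpow_nonneg (abs_nonneg _) _)

lemma norm_sub_le_holderN_mul {E : Type*} [NormedAddCommGroup E] {T lam : ℝ} {f : ℝ → E}
    (hf : BddAbove (range fun p : Icc (0:ℝ) T × Icc (0:ℝ) T =>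
      ‖f (p.2 : ℝ) - f (p.1 : ℝ)‖ / |(p.2 : ℝ) - (p.1 : ℝ)| ^ lam))
    {u v : ℝ} (hu : u ∈ Icc 0 T) (hv : v ∈ Icc 0 T) :
    ‖f v - f u‖ ≤ holderN T lam f * |v - u| ^ lam := by
  rcases eq_or_ne v u with rfl | hne
  · simp only [sub_self, norm_zero]
    exact mul_nonneg (holderN_nonneg T lam f) (Real.rpow_nonneg (abs_nonneg _) _)
  · rw [← div_le_iff₀ (Real.rpow_pos_of_pos (abs_pos.2 (sub_ne_zero.2 hne)) lam)]
    exact le_ciSup hf (⟨⟨u, hu⟩, ⟨v, hv⟩⟩ : Icc (0:ℝ) T × Icc (0:ℝ) T)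

section Increments

variable {b : ℝ → ℝ} {K₁ K₂ : ℝ}

lemma abs_sub_le_of_abs_deriv_le (hb : Differentiable ℝ b) (hb1 : ∀ u, |deriv b u| ≤ K₁)
    (u v : ℝ) : |b u - b v| ≤ K₁ * |u - v| :=
  convex_univ.norm_image_sub_le_of_norm_deriv_le (fun x _ => hb x) (fun x _ => hb1 x)
    (mem_univ v) (mem_univ u)

/-- The increment `x ↦ b (x + c) - b x` has derivative of size at most `K₂ |c|`. -/
lemma abs_sub_sub_sub_le_of_lipschitz_deriv (hb : Differentiable ℝ b)
    (hb2 : ∀ u v, |deriv b u - deriv b v| ≤ K₂ * |u - v|) (c x x' : ℝ) :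
    |(b (x + c) - b x) - (b (x' + c) - b x')| ≤ K₂ * |c| * |x - x'| := by
  have hderiv : ∀ t, HasDerivAt (fun t => b (t + c) - b t) (deriv b (t + c) - deriv b t) t :=
    fun t => ((hb (t + c)).hasDerivAt.comp_add_const t c).sub (hb t).hasDerivAt
  refine convex_univ.norm_image_sub_le_of_norm_hasDerivWithin_le
    (fun t _ => (hderiv t).hasDerivWithinAt) (fun t _ => ?_) (mem_univ x') (mem_univ x)
  simpa only [Real.norm_eq_abs, add_sub_cancel_left] using hb2 (t + c) t

lemma abs_sub_sub_sub_le_of_deriv_bounds (hb : Differentiable ℝ b)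
    (hb1 : ∀ u, |deriv b u| ≤ K₁) (hb2 : ∀ u v, |deriv b u - deriv b v| ≤ K₂ * |u - v|)
    (x x' c c' : ℝ) :
    |(b (x + c) - b x) - (b (x' + c') - b x')| ≤ K₁ * |c - c'| + K₂ * |c'| * |x - x'| := by
  calc |(b (x + c) - b x) - (b (x' + c') - b x')|
      = |(b (x + c) - b (x + c')) + ((b (x + c') - b x) - (b (x' + c') - b x'))| := by ring_nf
    _ ≤ |b (x + c) - b (x + c')| + |(b (x + c') - b x) - (b (x' + c') - b x')| := abs_add_le _ _
    _ ≤ K₁ * |c - c'| + K₂ * |c'| * |x - x'| := by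
      gcongr
      · simpa only [add_sub_add_left_eq_sub] using abs_sub_le_of_abs_deriv_le hb hb1 (x + c) (x + c')
      · exact abs_sub_sub_sub_le_of_lipschitz_deriv hb hb2 c' x x'

lemma abs_sub_sub_sub_le_of_deriv_bounds_linear (hb : Differentiable ℝ b)
    (hb1 : ∀ u, |deriv b u| ≤ K₁) (hb2 : ∀ u v, |deriv b u - deriv b v| ≤ K₂ * |u - v|)
    (hK₂ : 0 ≤ K₂) {T ε y r s : ℝ} (hT : 0 < T) (hε : 0 ≤ ε) (hr : r ∈ Icc 0 T) (X : ℝ → ℝ) :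
    |(b (X s + (T - s) / T * ε * y) - b (X s)) - (b (X r + (T - r) / T * ε * y) - b (X r))| ≤
      K₁ * ε * |y| / T * |s - r| + K₂ * (ε * |y|) * |X s - X r| := by
  have hcr : |(T - r) / T * ε * y| ≤ ε * |y| := by
    have : |(T - r) / T| ≤ 1 := by
      rw [abs_div, abs_of_pos hT, div_le_one hT, abs_le]
      constructor <;> linarith [hr.1, hr.2]
    rw [abs_mul, abs_mul, abs_of_nonneg hε, mul_assoc]
    exact mul_le_of_le_one_left (by positivity) this
  have hcsr : |(T - s) / T * ε * y - (T - r) / T * ε * y| = ε * |y| / T * |s - r| := by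
    rw [show (T - s) / T * ε * y - (T - r) / T * ε * y = -((s - r) * (ε * y / T)) by
      field_simp; ring, abs_neg, abs_mul, abs_div, abs_mul, abs_of_nonneg hε, abs_of_pos hT]
    ring
  calc _ ≤ K₁ * (ε * |y| / T * |s - r|) + K₂ * |(T - r) / T * ε * y| * |X s - X r| :=
        hcsr ▸ abs_sub_sub_sub_le_of_deriv_bounds hb hb1 hb2 _ _ _ _
    _ ≤ K₁ * (ε * |y| / T * |s - r|) + K₂ * (ε * |y|) * |X s - X r| := by gcongr
    _ = _ := by ring

end Increments

lemma integral_sub_rpow {s p : ℝ} (hp : -1 < p) :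
    ∫ r in (0:ℝ)..s, (s - r) ^ p = s ^ (p + 1) / (p + 1) := by
  rw [intervalIntegral.integral_comp_sub_left (fun x => x ^ p) s, sub_self, sub_zero,
    integral_rpow (Or.inl hp), Real.zero_rpow (by linarith), sub_zero]

lemma intervalIntegrable_sub_rpow {s p : ℝ} (hp : -1 < p) :
    IntervalIntegrable (fun r => (s - r) ^ p) volume 0 s := by
  simpa using ((intervalIntegral.intervalIntegrable_rpow' (a := 0) (b := s) hp).comp_sub_left s).symm

lemma abs_div_rpow_le_of_abs_le {x A C α β : ℝ} (hx : 0 < x) {z : ℝ}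
    (hz : |z| ≤ A * x + C * x ^ β) :
    |z / x ^ α| ≤ A * x ^ (1 - α) + C * x ^ (β - α) := by
  have hxα : 0 < x ^ α := Real.rpow_pos_of_pos hx α
  rw [Real.rpow_sub hx, Real.rpow_sub hx, Real.rpow_one, abs_div, abs_of_pos hxα]
  calc |z| / x ^ α ≤ (A * x + C * x ^ β) / x ^ α := by gcongr
    _ = A * (x / x ^ α) + C * (x ^ β / x ^ α) := by ring

lemma abs_integral_sub_div_rpow_le {f : ℝ → ℝ} {s α β A C : ℝ} (hs : 0 ≤ s) (hα : α < 2)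
    (hαβ : α < 1 + β) (hf : ∀ r ∈ Ico 0 s, |f s - f r| ≤ A * (s - r) + C * (s - r) ^ β) :
    |∫ r in (0:ℝ)..s, (f s - f r) / (s - r) ^ α| ≤
      A * (s ^ (2 - α) / (2 - α)) + C * (s ^ (1 + β - α) / (1 + β - α)) := by
  have h1 : -1 < 1 - α := by linarith
  have h2 : -1 < β - α := by linarith
  calc |∫ r in (0:ℝ)..s, (f s - f r) / (s - r) ^ α|
      ≤ ∫ r in (0:ℝ)..s, (A * (s - r) ^ (1 - α) + C * (s - r) ^ (β - α)) := by
        rw [← Real.norm_eq_abs]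
        refine intervalIntegral.norm_integral_le_of_norm_le hs ?_
          (((intervalIntegrable_sub_rpow h1).const_mul A).add
            ((intervalIntegrable_sub_rpow h2).const_mul C))
        filter_upwards [volume.ae_ne s] with r hrs hr
        exact abs_div_rpow_le_of_abs_le (sub_pos.2 (lt_of_le_of_ne hr.2 hrs))
          (hf r ⟨hr.1.le, lt_of_le_of_ne hr.2 hrs⟩)
    _ = A * (s ^ (2 - α) / (2 - α)) + C * (s ^ (1 + β - α) / (1 + β - α)) := by
      rw [intervalIntegral.integral_add ((intervalIntegrable_sub_rpow h1).const_mul A)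
          ((intervalIntegrable_sub_rpow h2).const_mul C),
        intervalIntegral.integral_const_mul, intervalIntegral.integral_const_mul,
        integral_sub_rpow h1, integral_sub_rpow h2]
      ring_nf

theorem stmt_7_general (T H δ ε y K₁ K₂ d₁ d₂ : ℝ)
    (hT : 0 < T) (hH : H ∈ Ioo (1/2 : ℝ) 1) (hδ : δ ∈ Ioo (0:ℝ) (1/2))
    (hε : 0 < ε) (hK₂ : 0 ≤ K₂)
    (b : ℝ → ℝ) (hb : Differentiable ℝ b)
    (hb1 : ∀ u, |deriv b u| ≤ K₁) (hb2 : ∀ u v, |deriv b u - deriv b v| ≤ K₂ * |u - v|)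
    (B : ℝ → ℝ)
    (hBβ : BddAbove (Set.range fun p : Icc (0:ℝ) T × Icc (0:ℝ) T =>
      |B (p.2 : ℝ) - B (p.1 : ℝ)| / |(p.2 : ℝ) - (p.1 : ℝ)| ^ (H - δ)))
    (X : ℝ → ℝ)
    (hX : ∀ s ∈ Icc (0:ℝ) T, ∀ t ∈ Icc (0:ℝ) T,
      |X t - X s| ≤ d₁ * |t - s| + d₂ * supN T B * |t - s| + |B t - B s|)
    (Xε η : ℝ → ℝ)
    (hXε : ∀ t, Xε t = X t + ((T - t) / T) * ε * y)
    (hη : ∀ t, η t = b (X t) - b (Xε t) - (ε / T) * y) :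
    ∀ s ∈ Icc (0:ℝ) T,
      |∫ r in (0:ℝ)..s, (η s - η r) / (s - r) ^ ((1:ℝ)/2 + H)| ≤
        (T * d₁ * K₂ + K₂ * |y| * ε + K₁) / ((3/2 - H) * T) * |y| * ε * s ^ ((3:ℝ)/2 - H)
        + d₂ * K₂ / (3/2 - H) * |y| * ε * supN T B * s ^ ((3:ℝ)/2 - H)
        + K₂ / (1/2 - δ) * |y| * ε * s ^ ((1:ℝ)/2 - δ) * holderN T (H - δ) B := by
  intro s hs
  have hincr : ∀ r ∈ Ico 0 s, |η s - η r| ≤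
      ((T * d₁ * K₂ + K₂ * |y| * ε + K₁) / T * |y| * ε + d₂ * K₂ * |y| * ε * supN T B) * (s - r)
        + K₂ * |y| * ε * holderN T (H - δ) B * (s - r) ^ (H - δ) := by
    intro r hr
    have hrT : r ∈ Icc 0 T := ⟨hr.1, hr.2.le.trans hs.2⟩
    have hsr : |s - r| = s - r := abs_of_nonneg (sub_nonneg.2 hr.2.le)
    have hB : |B s - B r| ≤ holderN T (H - δ) B * |s - r| ^ (H - δ) := by
      simpa only [Real.norm_eq_abs] using
        norm_sub_le_holderN_mul (f := B) (by simpa only [Real.norm_eq_abs] using hBβ) hrT hs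
    have hη_sub : η s - η r = -((b (X s + (T - s) / T * ε * y) - b (X s))
        - (b (X r + (T - r) / T * ε * y) - b (X r))) := by
      rw [hη, hη, hXε, hXε]; ring
    have hslack : 0 ≤ K₂ * (|y| * ε) ^ 2 / T * (s - r) := by
      have := sub_nonneg.2 hr.2.le
      positivity
    rw [hη_sub, abs_neg]
    calc _ ≤ K₁ * ε * |y| / T * |s - r| + K₂ * (ε * |y|) * |X s - X r| :=
          abs_sub_sub_sub_le_of_deriv_bounds_linear hb hb1 hb2 hK₂ hT hε.le hrT X
      _ ≤ K₁ * ε * |y| / T * |s - r| + K₂ * (ε * |y|) *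
            (d₁ * |s - r| + d₂ * supN T B * |s - r| + holderN T (H - δ) B * |s - r| ^ (H - δ)) := by
          gcongr
          exact (hX r hrT s hs).trans (by gcongr)
      _ ≤ _ := by
          have hcoef : (T * d₁ * K₂ + K₂ * |y| * ε + K₁) / T * |y| * ε
              = K₁ * ε * |y| / T + K₂ * (ε * |y|) * d₁ + K₂ * (|y| * ε) ^ 2 / T := by
            field_simp; ring
          rw [hsr, hcoef]
          linear_combination hslack
  calc _ ≤ _ := abs_integral_sub_div_rpow_le hs.1 (by linarith [hH.2]) (by linarith [hδ.2]) hincr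
    _ = _ := by
      rw [show (2:ℝ) - (1/2 + H) = 3/2 - H by ring,
        show 1 + (H - δ) - ((1:ℝ)/2 + H) = 1/2 - δ by ring]
      field_simp

/-- Estimate of the term `I₃ = ∫_0^s (η_s - η_r)/(s-r)^{1/2+H} dr` in the proof of the Bismut
derivative formula for `H > 1/2`, where `η_t = b(X_t) - b(X^ε_t) - (ε/T) y` and
`X^ε_t = X_t + ((T-t)/T) ε y`. -/
theorem stmt_7 (T H δ ε y K₁ K₂ d₁ d₂ : ℝ)
    (hT : 0 < T) (hH : H ∈ Ioo (1/2 : ℝ) 1) (hδ : δ ∈ Ioo (0:ℝ) (1/2)) (hδH : δ < H)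
    (hε : 0 < ε) (hK₁ : 0 ≤ K₁) (hK₂ : 0 ≤ K₂) (hd₁ : 0 ≤ d₁) (hd₂ : 0 ≤ d₂)
    (b : ℝ → ℝ) (hb : Differentiable ℝ b)
    (hb1 : ∀ u, |deriv b u| ≤ K₁) (hb2 : ∀ u v, |deriv b u - deriv b v| ≤ K₂ * |u - v|)
    (B : ℝ → ℝ) (hBc : ContinuousOn B (Icc 0 T)) (hB0 : B 0 = 0)
    (hBβ : BddAbove (Set.range fun p : Icc (0:ℝ) T × Icc (0:ℝ) T =>
      |B (p.2 : ℝ) - B (p.1 : ℝ)| / |(p.2 : ℝ) - (p.1 : ℝ)| ^ (H - δ)))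
    (X : ℝ → ℝ)
    (hX : ∀ s ∈ Icc (0:ℝ) T, ∀ t ∈ Icc (0:ℝ) T,
      |X t - X s| ≤ d₁ * |t - s| + d₂ * supN T B * |t - s| + |B t - B s|)
    (Xε η : ℝ → ℝ)
    (hXε : ∀ t, Xε t = X t + ((T - t) / T) * ε * y)
    (hη : ∀ t, η t = b (X t) - b (Xε t) - (ε / T) * y) :
    ∀ s ∈ Icc (0:ℝ) T,
      |∫ r in (0:ℝ)..s, (η s - η r) / (s - r) ^ ((1:ℝ)/2 + H)| ≤
        (T * d₁ * K₂ + K₂ * |y| * ε + K₁) / ((3/2 - H) * T) * |y| * ε * s ^ ((3:ℝ)/2 - H)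
        + d₂ * K₂ / (3/2 - H) * |y| * ε * supN T B * s ^ ((3:ℝ)/2 - H)
        + K₂ / (1/2 - δ) * |y| * ε * s ^ ((1:ℝ)/2 - δ) * holderN T (H - δ) B :=
  stmt_7_general T H δ ε y K₁ K₂ d₁ d₂ hT hH hδ hε hK₂ b hb hb1 hb2 B hBβ X hX Xε η hXε hη
end

section
/- Let $T>0$, $H\in(0,\frac{1}{2})$, $\bar K_1\ge 0$, $y\in\mathbb{R}^d$, and let $v:[0,T]\to\mathbb{R}^d$ be measurable with $|v(r)|\le \bar K_1|y|$ for all $r\in[0,T]$. Then $\frac{1}{(\Gamma(\frac{1}{2}-H)T)^2}\int_0^T s^{2H-1}\Big(\int_0^s \frac{r^{\frac{1}{2}-H}}{(s-r)^{\frac{1}{2}+H}}\,|y-r\,v(r)|\,dr\Big)^2 ds \le \Big(\frac{B(\frac{3}{2}-H,\frac{1}{2}-H)}{\Gamma(\frac{1}{2}-H)}\Big)^2 \frac{(1+\bar K_1T)^2}{2(1-H)\,T^{2H}}\,|y|^2$. -/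
open MeasureTheory Set

set_option maxHeartbeats 800000

private lemma stmt_12_aux (G t P Q u k n b : ℝ) (hG : G ≠ 0) (ht : t ≠ 0) (hQ : Q ≠ 0)
    (hu : u ≠ 0) (hPQ : P * Q = t ^ 2) :
    (1 / (G * t) ^ 2) * ((k * n) ^ 2 * b ^ 2 * (P / (2 * u))) =
      (b / G) ^ 2 * (k ^ 2 / (2 * u * Q)) * n ^ 2 := by
  rw [show P = t ^ 2 / Q from (eq_div_iff hQ).2 hPQ]
  field_simp

/-- Bound on the quadratic variation `⟨N¹⟩_T` of the martingale in the integration by parts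
formula for `H < 1/2`: with `|v(r)| ≤ K̄₁|y|` on `[0,T]`,
`(1/(Γ(1/2-H)T)²) ∫_0^T s^{2H-1} (∫_0^s r^{1/2-H}/(s-r)^{1/2+H} |y - r v(r)| dr)² ds
≤ (B(3/2-H,1/2-H)/Γ(1/2-H))² (1+K̄₁T)²/(2(1-H)T^{2H}) |y|²`,
where `B(a,b) = ∫_0^1 θ^{a-1}(1-θ)^{b-1} dθ` and `Γ` is the Gamma function. -/
theorem stmt_12 {d : ℕ} (T H Kbar : ℝ) (hT : 0 < T) (hH : H ∈ Ioo (0:ℝ) (1/2))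
    (hKbar : 0 ≤ Kbar)
    (y : EuclideanSpace ℝ (Fin d)) (v : ℝ → EuclideanSpace ℝ (Fin d))
    (hv : Measurable v) (hvb : ∀ r ∈ Icc (0:ℝ) T, ‖v r‖ ≤ Kbar * ‖y‖) :
    (1 / (Real.Gamma (1/2 - H) * T) ^ 2) *
      (∫ s in (0:ℝ)..T, s ^ (2 * H - 1) *
        (∫ r in (0:ℝ)..s, r ^ ((1:ℝ)/2 - H) / (s - r) ^ ((1:ℝ)/2 + H) * ‖y - r • v r‖) ^ 2) ≤
    ((∫ θ in (0:ℝ)..1, θ ^ (((3:ℝ)/2 - H) - 1) * (1 - θ) ^ (((1:ℝ)/2 - H) - 1)) /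
        Real.Gamma (1/2 - H)) ^ 2 *
      ((1 + Kbar * T) ^ 2 / (2 * (1 - H) * T ^ (2 * H))) * ‖y‖ ^ 2 := by
  obtain ⟨hH0, hH2⟩ := hH
  have hΓ : 0 < Real.Gamma (1/2 - H) := Real.Gamma_pos_of_pos (by linarith)
  set B : ℝ := ∫ θ in (0:ℝ)..1, θ ^ (((3:ℝ)/2 - H) - 1) * (1 - θ) ^ (((1:ℝ)/2 - H) - 1) with hB
  have hBnn : 0 ≤ B := by
    apply intervalIntegral.integral_nonneg (by norm_num)
    intro θ hθ
    exact mul_nonneg (Real.rpow_nonneg hθ.1 _) (Real.rpow_nonneg (by linarith [hθ.2]) _)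
  set M : ℝ := (1 + Kbar * T) * ‖y‖ with hM
  have hMnn : 0 ≤ M := mul_nonneg (by nlinarith) (norm_nonneg y)
  set w : ℝ → ℝ → ℝ := fun s r => r ^ ((1:ℝ)/2 - H) / (s - r) ^ ((1:ℝ)/2 + H) with hw
  have hwnn : ∀ s r : ℝ, 0 ≤ r → r ≤ s → 0 ≤ w s r := fun s r h1 h2 =>
    div_nonneg (Real.rpow_nonneg h1 _) (Real.rpow_nonneg (by linarith) _)
  -- integrability of the weight
  have hwint : ∀ s : ℝ, 0 < s → IntegrableOn (w s) (Ioc 0 s) := by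
    intro s hs
    have hbase : IntegrableOn (fun r => (s - r) ^ (-((1:ℝ)/2 + H))) (Ioc 0 s) := by
      have h1 : IntervalIntegrable (fun x : ℝ => x ^ (-((1:ℝ)/2 + H))) volume 0 s :=
        intervalIntegral.intervalIntegrable_rpow' (by linarith)
      have h2 := (h1.comp_sub_left s).symm
      simp only [sub_zero, sub_self] at h2
      exact (intervalIntegrable_iff_integrableOn_Ioc_of_le hs.le).1 h2
    have hbase' : IntegrableOn (fun r => s ^ ((1:ℝ)/2 - H) * (s - r) ^ (-((1:ℝ)/2 + H)))
        (Ioc 0 s) := hbase.const_mul _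
    apply hbase'.mono'
    · exact (((Real.continuous_rpow_const (by linarith : (0:ℝ) ≤ 1/2 - H)).measurable).div
        (((Real.continuous_rpow_const (by linarith : (0:ℝ) ≤ 1/2 + H)).comp
          (continuous_const.sub continuous_id)).measurable)).aestronglyMeasurable
    · filter_upwards [ae_restrict_mem measurableSet_Ioc] with r hr
      have h0r : (0:ℝ) ≤ r := hr.1.le
      have hrs : r ≤ s := hr.2
      have : w s r = r ^ ((1:ℝ)/2 - H) * (s - r) ^ (-((1:ℝ)/2 + H)) := by
        rw [hw]
        simp only
        rw [Real.rpow_neg (by linarith), div_eq_mul_inv]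
      rw [Real.norm_of_nonneg (hwnn s r h0r hrs), this]
      exact mul_le_mul_of_nonneg_right
        (Real.rpow_le_rpow h0r hrs (by linarith)) (Real.rpow_nonneg (by linarith) _)
  -- value of the weight integral, via the substitution r = θ s
  have hwval : ∀ s : ℝ, 0 < s → (∫ r in (0:ℝ)..s, w s r) = s ^ (1 - 2*H) * B := by
    intro s hs
    have key := intervalIntegral.integral_comp_mul_right (a := (0:ℝ)) (b := 1)
      (fun r => w s r) (ne_of_gt hs)
    simp only [zero_mul, one_mul, smul_eq_mul] at key
    have congrstep : (∫ θ in (0:ℝ)..1, w s (θ * s)) =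
        ∫ θ in (0:ℝ)..1, s ^ (((1:ℝ)/2 - H) - ((1:ℝ)/2 + H)) *
          (θ ^ (((3:ℝ)/2 - H) - 1) * (1 - θ) ^ (((1:ℝ)/2 - H) - 1)) := by
      apply intervalIntegral.integral_congr
      intro θ hθ
      rw [uIcc_of_le (by norm_num : (0:ℝ) ≤ 1)] at hθ
      obtain ⟨hθ0, hθ1⟩ := hθ
      have e1 : ((3:ℝ)/2 - H) - 1 = (1:ℝ)/2 - H := by ring
      have e2 : ((1:ℝ)/2 - H) - 1 = -((1:ℝ)/2 + H) := by ring
      rw [e1, e2, hw]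
      simp only
      have e3 : s - θ * s = (1 - θ) * s := by ring
      have h1 : s ^ (((1:ℝ)/2 - H) - ((1:ℝ)/2 + H))
          = s ^ ((1:ℝ)/2 - H) * (s ^ ((1:ℝ)/2 + H))⁻¹ := by
        rw [Real.rpow_sub hs, div_eq_mul_inv]
      rw [e3, Real.mul_rpow hθ0 hs.le, Real.mul_rpow (by linarith) hs.le,
        Real.rpow_neg (by linarith : (0:ℝ) ≤ 1 - θ), h1, div_eq_mul_inv, mul_inv]
      ring
    rw [intervalIntegral.integral_const_mul] at congrstep
    rw [congrstep] at key
    have : (∫ r in (0:ℝ)..s, w s r) = s * (s ^ (((1:ℝ)/2 - H) - ((1:ℝ)/2 + H)) * B) := by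
      rw [key]; field_simp
    rw [this, ← mul_assoc]
    congr 1
    rw [show s * s ^ (((1:ℝ)/2 - H) - ((1:ℝ)/2 + H))
        = s ^ (1:ℝ) * s ^ (((1:ℝ)/2 - H) - ((1:ℝ)/2 + H)) by rw [Real.rpow_one],
      ← Real.rpow_add hs]
    congr 1
    ring
  -- inner integral bound
  have hinner : ∀ s ∈ Ioc (0:ℝ) T,
      (∫ r in (0:ℝ)..s, w s r * ‖y - r • v r‖) ≤ M * (s ^ (1 - 2*H) * B) := by
    intro s hs
    have hint := hwint s hs.1
    have step : (∫ r in (0:ℝ)..s, w s r * ‖y - r • v r‖) ≤ ∫ r in (0:ℝ)..s, M * w s r := by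
      rw [intervalIntegral.integral_of_le hs.1.le, intervalIntegral.integral_of_le hs.1.le]
      apply integral_mono_of_nonneg
      · filter_upwards [ae_restrict_mem measurableSet_Ioc] with r hr
        exact mul_nonneg (hwnn s r hr.1.le hr.2) (norm_nonneg _)
      · exact hint.const_mul M
      · filter_upwards [ae_restrict_mem measurableSet_Ioc] with r hr
        have h0r : (0:ℝ) ≤ r := hr.1.le
        have hrT : r ≤ T := hr.2.trans hs.2
        have hbnd : ‖y - r • v r‖ ≤ M := by
          calc ‖y - r • v r‖ ≤ ‖y‖ + ‖r • v r‖ := norm_sub_le _ _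
            _ = ‖y‖ + r * ‖v r‖ := by rw [norm_smul, Real.norm_of_nonneg h0r]
            _ ≤ ‖y‖ + T * (Kbar * ‖y‖) := by
                have hv1 := hvb r ⟨h0r, hrT⟩
                have : r * ‖v r‖ ≤ T * (Kbar * ‖y‖) :=
                  mul_le_mul hrT hv1 (norm_nonneg _) hT.le
                linarith
            _ = M := by rw [hM]; ring
        calc w s r * ‖y - r • v r‖ ≤ w s r * M :=
              mul_le_mul_of_nonneg_left hbnd (hwnn s r h0r hr.2)
          _ = M * w s r := mul_comm _ _
    calc (∫ r in (0:ℝ)..s, w s r * ‖y - r • v r‖) ≤ ∫ r in (0:ℝ)..s, M * w s r := step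
      _ = M * ∫ r in (0:ℝ)..s, w s r := intervalIntegral.integral_const_mul _ _
      _ = M * (s ^ (1 - 2*H) * B) := by rw [hwval s hs.1]
  -- outer integral bound
  have houter : (∫ s in (0:ℝ)..T, s ^ (2 * H - 1) *
        (∫ r in (0:ℝ)..s, w s r * ‖y - r • v r‖) ^ 2)
      ≤ M^2 * B^2 * (T ^ (2 - 2*H) / (2 - 2*H)) := by
    have gval : (∫ s in (0:ℝ)..T, M^2 * B^2 * s ^ (1 - 2*H))
        = M^2 * B^2 * (T ^ (2 - 2*H) / (2 - 2*H)) := by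
      rw [intervalIntegral.integral_const_mul,
        integral_rpow (Or.inl (by linarith : (-1:ℝ) < 1 - 2*H)),
        Real.zero_rpow (by intro hcon; linarith [hcon] : (1:ℝ) - 2*H + 1 ≠ 0),
        show (1:ℝ) - 2*H + 1 = 2 - 2*H by ring, sub_zero]
    have gint : IntegrableOn (fun s => M^2 * B^2 * s ^ (1 - 2*H)) (Ioc 0 T) := by
      have := (intervalIntegral.intervalIntegrable_rpow'
        (r := 1 - 2*H) (a := 0) (b := T) (by linarith))
      exact ((intervalIntegrable_iff_integrableOn_Ioc_of_le hT.le).1 this).const_mul _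
    have step : (∫ s in (0:ℝ)..T, s ^ (2 * H - 1) *
        (∫ r in (0:ℝ)..s, w s r * ‖y - r • v r‖) ^ 2)
        ≤ ∫ s in Ioc (0:ℝ) T, M^2 * B^2 * s ^ (1 - 2*H) := by
      rw [intervalIntegral.integral_of_le hT.le]
      apply integral_mono_of_nonneg
      · filter_upwards [ae_restrict_mem measurableSet_Ioc] with s hs
        exact mul_nonneg (Real.rpow_nonneg hs.1.le _) (sq_nonneg _)
      · exact gint
      · filter_upwards [ae_restrict_mem measurableSet_Ioc] with s hs
        have hIs0 : 0 ≤ ∫ r in (0:ℝ)..s, w s r * ‖y - r • v r‖ := by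
          apply intervalIntegral.integral_nonneg hs.1.le
          intro r hr
          exact mul_nonneg (hwnn s r hr.1 hr.2) (norm_nonneg _)
        have hIs := hinner s hs
        have hsq : (∫ r in (0:ℝ)..s, w s r * ‖y - r • v r‖) ^ 2
            ≤ (M * (s ^ (1 - 2*H) * B)) ^ 2 := pow_le_pow_left₀ hIs0 hIs 2
        have e1 : s ^ (1 - 2*H) * s ^ (1 - 2*H) = s ^ (2 - 4*H) := by
          rw [← Real.rpow_add hs.1]; ring_nf
        have e2 : s ^ (2*H - 1) * s ^ (2 - 4*H) = s ^ (1 - 2*H) := by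
          rw [← Real.rpow_add hs.1]; ring_nf
        have key : s ^ (2*H - 1) * (M * (s ^ (1 - 2*H) * B)) ^ 2 = M^2 * B^2 * s ^ (1 - 2*H) := by
          calc s ^ (2*H - 1) * (M * (s ^ (1 - 2*H) * B)) ^ 2
              = (M^2 * B^2) * (s ^ (2*H - 1) * (s ^ (1 - 2*H) * s ^ (1 - 2*H))) := by ring
            _ = M^2 * B^2 * s ^ (1 - 2*H) := by
                rw [e1]; linear_combination M^2 * B^2 * e2
        calc s ^ (2 * H - 1) * (∫ r in (0:ℝ)..s, w s r * ‖y - r • v r‖) ^ 2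
            ≤ s ^ (2 * H - 1) * (M * (s ^ (1 - 2*H) * B)) ^ 2 :=
              mul_le_mul_of_nonneg_left hsq (Real.rpow_nonneg hs.1.le _)
          _ = M^2 * B^2 * s ^ (1 - 2*H) := key
    calc (∫ s in (0:ℝ)..T, s ^ (2 * H - 1) *
          (∫ r in (0:ℝ)..s, w s r * ‖y - r • v r‖) ^ 2)
        ≤ ∫ s in Ioc (0:ℝ) T, M^2 * B^2 * s ^ (1 - 2*H) := step
      _ = ∫ s in (0:ℝ)..T, M^2 * B^2 * s ^ (1 - 2*H) :=
          (intervalIntegral.integral_of_le hT.le).symm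
      _ = M^2 * B^2 * (T ^ (2 - 2*H) / (2 - 2*H)) := gval
  -- final assembly
  have hc : 0 ≤ 1 / (Real.Gamma (1/2 - H) * T) ^ 2 := by positivity
  calc (1 / (Real.Gamma (1/2 - H) * T) ^ 2) *
      (∫ s in (0:ℝ)..T, s ^ (2 * H - 1) *
        (∫ r in (0:ℝ)..s, w s r * ‖y - r • v r‖) ^ 2)
      ≤ (1 / (Real.Gamma (1/2 - H) * T) ^ 2) * (M^2 * B^2 * (T ^ (2 - 2*H) / (2 - 2*H))) :=
        mul_le_mul_of_nonneg_left houter hc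
    _ = (B / Real.Gamma (1/2 - H)) ^ 2 *
        ((1 + Kbar * T) ^ 2 / (2 * (1 - H) * T ^ (2 * H))) * ‖y‖ ^ 2 := by
        have hTT : T ^ (2 - 2*H) * T ^ (2*H) = T ^ 2 := by
          rw [← Real.rpow_natCast T 2, ← Real.rpow_add hT]; norm_num
        have hT2H : (0:ℝ) < T ^ (2*H) := Real.rpow_pos_of_pos hT _
        have hΓ' : Real.Gamma (1/2 - H) ≠ 0 := ne_of_gt hΓ
        have h1H : (1:ℝ) - H ≠ 0 := by intro h; linarith
        rw [hM]
        nth_rewrite 2 [show (2:ℝ) - 2*H = 2*(1-H) by ring]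
        exact stmt_12_aux (Real.Gamma (1/2 - H)) T (T ^ (2 - 2*H)) (T ^ (2*H)) (1 - H)
          (1 + Kbar * T) ‖y‖ B hΓ' hT.ne' hT2H.ne' h1H hTT
end

section
/- Let $P$ be a Markov (probability) kernel on $\mathbb{R}^d$, and suppose there exist constants $p>1$, $r>0$ and $c\ge 0$ such that for all bounded measurable $f:\mathbb{R}^d\to[0,\infty)$ and all $x,y\in\mathbb{R}^d$ with $|x-y|\le r$, $\Big(\int f\,dP(x,\cdot)\Big)^p \le \Big(\int f^p\,dP(y,\cdot)\Big)\,e^{c|x-y|^2}$. Then $P$ is strong Feller: for every bounded measurable $f:\mathbb{R}^d\to\mathbb{R}$, the function $x\mapsto \int f\,dP(x,\cdot)$ is continuous; in particular $\lim_{|y-x|\to 0}\int f\,dP(y,\cdot) = \int f\,dP(x,\cdot)$ for every $x$. -/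
open MeasureTheory Set ProbabilityTheory Filter Topology

/-!
Test the Harnack inequality `(∫ g dν)^p ≤ E ∫ g^p dμ` on `1 + t g` with `0 ≤ g ≤ 1`: Bernoulli's
inequality bounds the left side from below and convexity of `s ↦ s^p` on `[1, 1 + t]` bounds the
right side from above, giving
`p t ∫ g dν ≤ E - 1 + E ((1 + t)^p - 1) ∫ g dμ`.
Letting `E → 1` (i.e. `y → x`) at a fixed small `t`, where `((1 + t)^p - 1) / t ≈ p`, yields
`∫ g dν < ∫ g dμ + η` eventually. Applied to `1 - g` this gives the reverse bound, and every
bounded `f` is an affine image of such a `g`.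
-/

theorem one_add_mul_rpow_le {p t s : ℝ} (hp : 1 ≤ p) (ht : 0 ≤ t) (hs0 : 0 ≤ s) (hs1 : s ≤ 1) :
    (1 + t * s) ^ p ≤ 1 + s * ((1 + t) ^ p - 1) := by
  have h := (convexOn_rpow hp).2 (show (1 : ℝ) ∈ Ici 0 by simp)
    (show 1 + t ∈ Ici 0 by simp; linarith) (show 0 ≤ 1 - s by linarith) hs0 (by ring)
  simp only [smul_eq_mul, Real.one_rpow, mul_one] at h
  rw [show 1 - s + s * (1 + t) = 1 + t * s by ring] at h
  linarith

theorem tendsto_one_add_rpow_slope {p : ℝ} (hp : 1 ≤ p) :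
    Tendsto (fun t : ℝ => t⁻¹ * ((1 + t) ^ p - 1)) (𝓝[>] 0) (𝓝 p) := by
  simpa using (Real.hasDerivAt_rpow_const (x := 1) (Or.inr hp)).tendsto_slope_zero_right

section Harnack

variable {Ω : Type*} [MeasurableSpace Ω]

/-- In the paper's `(P f)^p(x) ≤ P f^p(y) e^{c|x-y|²}`, `ν` is `P(x, ·)`, `μ` is `P(y, ·)` and
`E = e^{c|x-y|²}`. -/
def HarnackIneq (p E : ℝ) (ν μ : Measure Ω) : Prop :=
  ∀ g : Ω → ℝ, Measurable g → (∀ z, 0 ≤ g z) → (∃ M, ∀ z, g z ≤ M) →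
    (∫ z, g z ∂ν) ^ p ≤ (∫ z, g z ^ p ∂μ) * E

theorem integrable_of_nonneg_of_le_one {μ : Measure Ω} [IsFiniteMeasure μ] {g : Ω → ℝ}
    (hg : Measurable g) (hg0 : ∀ z, 0 ≤ g z) (hg1 : ∀ z, g z ≤ 1) : Integrable g μ :=
  .of_bound hg.aestronglyMeasurable 1 (.of_forall fun z => by
    rw [Real.norm_eq_abs, abs_of_nonneg (hg0 z)]; exact hg1 z)

theorem HarnackIneq.mul_integral_le {p E : ℝ} {ν μ : Measure Ω} [IsProbabilityMeasure ν]
    [IsProbabilityMeasure μ] (h : HarnackIneq p E ν μ) (hp : 1 ≤ p) (hE : 0 ≤ E) {g : Ω → ℝ}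
    (hg : Measurable g) (hg0 : ∀ z, 0 ≤ g z) (hg1 : ∀ z, g z ≤ 1) {t : ℝ} (ht : 0 ≤ t) :
    p * t * ∫ z, g z ∂ν ≤ E - 1 + E * ((1 + t) ^ p - 1) * ∫ z, g z ∂μ := by
  have hgν := integrable_of_nonneg_of_le_one (μ := ν) hg hg0 hg1
  have hgμ := integrable_of_nonneg_of_le_one (μ := μ) hg hg0 hg1
  have hmean : ∫ z, (1 + t * g z) ∂ν = 1 + t * ∫ z, g z ∂ν := by
    rw [integral_add (integrable_const 1) (hgν.const_mul t), integral_const_mul]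
    simp
  have hconv : ∫ z, (1 + t * g z) ^ p ∂μ ≤ 1 + ((1 + t) ^ p - 1) * ∫ z, g z ∂μ := by
    calc ∫ z, (1 + t * g z) ^ p ∂μ ≤ ∫ z, (1 + g z * ((1 + t) ^ p - 1)) ∂μ :=
          integral_mono_of_nonneg (.of_forall fun z => by have := hg0 z; positivity)
            ((integrable_const 1).add (hgμ.mul_const _))
            (.of_forall fun z => one_add_mul_rpow_le hp ht (hg0 z) (hg1 z))
      _ = 1 + ((1 + t) ^ p - 1) * ∫ z, g z ∂μ := by
          rw [integral_add (integrable_const 1) (hgμ.mul_const _), integral_mul_const]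
          simp [mul_comm]
  have hbernoulli : 1 + p * (t * ∫ z, g z ∂ν) ≤ (1 + t * ∫ z, g z ∂ν) ^ p :=
    one_add_mul_self_le_rpow_one_add (by nlinarith [(integral_nonneg hg0 : 0 ≤ ∫ z, g z ∂ν)]) hp
  have hharnack := h (fun z => 1 + t * g z) (by fun_prop) (fun z => by nlinarith [hg0 z])
    ⟨1 + t, fun z => by nlinarith [hg1 z]⟩
  rw [hmean] at hharnack
  nlinarith [mul_le_mul_of_nonneg_right hconv hE]

variable {Y : Type*} {l : Filter Y} {μ : Measure Ω} [IsProbabilityMeasure μ] {ν : Y → Measure Ω}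
  [∀ y, IsProbabilityMeasure (ν y)] {p : ℝ} {E : Y → ℝ}

theorem eventually_integral_lt_of_harnack (hp : 1 ≤ p) (hE : Tendsto E l (𝓝 1))
    (hH : ∀ᶠ y in l, HarnackIneq p (E y) (ν y) μ) {g : Ω → ℝ} (hg : Measurable g)
    (hg0 : ∀ z, 0 ≤ g z) (hg1 : ∀ z, g z ≤ 1) {η : ℝ} (hη : 0 < η) :
    ∀ᶠ y in l, ∫ z, g z ∂ν y < ∫ z, g z ∂μ + η := by
  set a := ∫ z, g z ∂μ
  have ha0 : 0 ≤ a := integral_nonneg hg0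
  have ha1 : a ≤ 1 := by
    calc a ≤ ∫ _, (1 : ℝ) ∂μ :=
          integral_mono (integrable_of_nonneg_of_le_one hg hg0 hg1) (integrable_const 1) hg1
      _ = 1 := by simp
  obtain ⟨t, hslope, ht⟩ : ∃ t : ℝ, t⁻¹ * ((1 + t) ^ p - 1) < p * (1 + η / 2) ∧ 0 < t :=
    (((tendsto_one_add_rpow_slope hp).eventually_lt_const (by nlinarith)).and
      self_mem_nhdsWithin).exists
  have hpt : 0 < p * t := by positivity
  rw [inv_mul_lt_iff₀ ht] at hslope
  have hlim : Tendsto (fun y => E y - 1 + E y * ((1 + t) ^ p - 1) * a) l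
      (𝓝 (((1 + t) ^ p - 1) * a)) := by
    simpa using (hE.sub_const 1).add ((hE.mul_const _).mul_const a)
  have hlt : ((1 + t) ^ p - 1) * a < p * t * (a + η) := by
    nlinarith [mul_le_mul_of_nonneg_right hslope.le ha0, mul_le_mul_of_nonneg_left ha1 hpt.le]
  filter_upwards [hlim.eventually_lt_const hlt, hH, hE.eventually_const_lt zero_lt_one]
    with y hy hHy hEy
  have := hHy.mul_integral_le hp hEy.le hg hg0 hg1 ht.le
  exact lt_of_mul_lt_mul_left (by linarith) hpt.le

theorem tendsto_integral_of_harnack_of_nonneg_of_le_one (hp : 1 ≤ p) (hE : Tendsto E l (𝓝 1))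
    (hH : ∀ᶠ y in l, HarnackIneq p (E y) (ν y) μ) {g : Ω → ℝ} (hg : Measurable g)
    (hg0 : ∀ z, 0 ≤ g z) (hg1 : ∀ z, g z ≤ 1) :
    Tendsto (fun y => ∫ z, g z ∂ν y) l (𝓝 (∫ z, g z ∂μ)) := by
  have hcompl : ∀ (m : Measure Ω) [IsProbabilityMeasure m],
      ∫ z, (1 - g z) ∂m = 1 - ∫ z, g z ∂m := fun m _ => by
    rw [integral_sub (integrable_const 1) (integrable_of_nonneg_of_le_one hg hg0 hg1)]
    simp
  refine tendsto_order.2 ⟨fun b hb => ?_, fun b hb => ?_⟩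
  · filter_upwards [eventually_integral_lt_of_harnack hp hE hH (hg.const_sub 1)
      (fun z => sub_nonneg.2 (hg1 z)) (fun z => sub_le_self 1 (hg0 z)) (sub_pos.2 hb)] with y hy
    rw [hcompl, hcompl] at hy
    linarith
  · filter_upwards [eventually_integral_lt_of_harnack hp hE hH hg hg0 hg1 (sub_pos.2 hb)] with y hy
    linarith

theorem tendsto_integral_of_harnack (hp : 1 ≤ p) (hE : Tendsto E l (𝓝 1))
    (hH : ∀ᶠ y in l, HarnackIneq p (E y) (ν y) μ) {f : Ω → ℝ} (hf : Measurable f)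
    (hbdd : ∃ M, ∀ z, |f z| ≤ M) :
    Tendsto (fun y => ∫ z, f z ∂ν y) l (𝓝 (∫ z, f z ∂μ)) := by
  obtain ⟨M, hM⟩ := hbdd
  obtain ⟨K, hK0, hK⟩ : ∃ K : ℝ, 0 < K ∧ ∀ z, |f z| ≤ K :=
    ⟨max M 1, by positivity, fun z => (hM z).trans (le_max_left M 1)⟩
  set g : Ω → ℝ := fun z => (f z + K) / (2 * K)
  have hg0 : ∀ z, 0 ≤ g z := fun z =>
    div_nonneg (by linarith [neg_abs_le (f z), hK z]) (by positivity)
  have hg1 : ∀ z, g z ≤ 1 := fun z =>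
    (div_le_one (by positivity)).2 (by linarith [le_abs_self (f z), hK z])
  have hfg : ∀ (m : Measure Ω) [IsProbabilityMeasure m],
      ∫ z, f z ∂m = 2 * K * ∫ z, g z ∂m - K :=
    fun m _ => calc
      ∫ z, f z ∂m = ∫ z, (2 * K * g z - K) ∂m :=
        integral_congr_ae (.of_forall fun z => by simp only [g]; field_simp; ring)
      _ = 2 * K * ∫ z, g z ∂m - K := by
        rw [integral_sub ((integrable_of_nonneg_of_le_one (by fun_prop) hg0 hg1).const_mul _)
          (integrable_const K), integral_const_mul]
        simp
  simp_rw [hfg]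
  exact ((tendsto_integral_of_harnack_of_nonneg_of_le_one hp hE hH (by fun_prop) hg0 hg1).const_mul
    _).sub_const _

end Harnack

theorem stmt_18_general {d : ℕ}
    (P : Kernel (EuclideanSpace ℝ (Fin d)) (EuclideanSpace ℝ (Fin d)))
    [IsMarkovKernel P]
    (p r c : ℝ) (hp : 1 < p) (hr : 0 < r)
    (hHarnack : ∀ f : EuclideanSpace ℝ (Fin d) → ℝ,
      Measurable f → (∀ z, 0 ≤ f z) → (∃ M, ∀ z, f z ≤ M) →
      ∀ x y : EuclideanSpace ℝ (Fin d), ‖x - y‖ ≤ r →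
        (∫ z, f z ∂(P x)) ^ p ≤ (∫ z, f z ^ p ∂(P y)) * Real.exp (c * ‖x - y‖ ^ 2)) :
    ∀ f : EuclideanSpace ℝ (Fin d) → ℝ, Measurable f → (∃ M, ∀ z, |f z| ≤ M) →
      Continuous (fun x => ∫ z, f z ∂(P x)) ∧
      ∀ x, Tendsto (fun y => ∫ z, f z ∂(P y)) (nhds x) (nhds (∫ z, f z ∂(P x))) := by
  intro f hf hbdd
  have htend : ∀ x, Tendsto (fun y => ∫ z, f z ∂(P y)) (𝓝 x) (𝓝 (∫ z, f z ∂(P x))) := by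
    intro x
    refine tendsto_integral_of_harnack (E := fun y => Real.exp (c * ‖y - x‖ ^ 2)) hp.le ?_ ?_
      hf hbdd
    · simpa using (show Continuous fun y => Real.exp (c * ‖y - x‖ ^ 2) by fun_prop).tendsto x
    · filter_upwards [Metric.closedBall_mem_nhds x hr] with y hy g hg hg0 hgM
      exact hHarnack g hg hg0 hgM y x (by rwa [← dist_eq_norm])
  exact ⟨continuous_iff_continuousAt.2 htend, htend⟩

/-- A local dimension-free Harnack inequality with power `p > 1` for a Markov kernel `P` on
`ℝ^d` implies that `P` is strong Feller: `x ↦ ∫ f dP(x,·)` is continuous for every bounded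
measurable `f`; in particular `∫ f dP(y,·) → ∫ f dP(x,·)` as `y → x`. -/
theorem stmt_18 {d : ℕ}
    (P : Kernel (EuclideanSpace ℝ (Fin d)) (EuclideanSpace ℝ (Fin d)))
    [IsMarkovKernel P]
    (p r c : ℝ) (hp : 1 < p) (hr : 0 < r) (hc : 0 ≤ c)
    (hHarnack : ∀ f : EuclideanSpace ℝ (Fin d) → ℝ,
      Measurable f → (∀ z, 0 ≤ f z) → (∃ M, ∀ z, f z ≤ M) →
      ∀ x y : EuclideanSpace ℝ (Fin d), ‖x - y‖ ≤ r →
        (∫ z, f z ∂(P x)) ^ p ≤ (∫ z, f z ^ p ∂(P y)) * Real.exp (c * ‖x - y‖ ^ 2)) :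
    ∀ f : EuclideanSpace ℝ (Fin d) → ℝ, Measurable f → (∃ M, ∀ z, |f z| ≤ M) →
      Continuous (fun x => ∫ z, f z ∂(P x)) ∧
      ∀ x, Tendsto (fun y => ∫ z, f z ∂(P y)) (nhds x) (nhds (∫ z, f z ∂(P x))) :=
  stmt_18_general P p r c hp hr hHarnack
end

section
/- Let $\nu$ be a Borel probability measure on $\mathbb{R}^d$ and suppose there exist constants $p>1$ and $C\ge 0$ such that for every Borel set $A\subseteq\mathbb{R}^d$ and every $y\in\mathbb{R}^d$, $\nu(A)^p \le e^{C|y|^2}\,\nu(A-y)$, where $A-y = \{a-y : a\in A\}$. Then $\nu$ is absolutely continuous with respect to the Lebesgue measure on $\mathbb{R}^d$ (so it has a density). -/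
open MeasureTheory Set

/-- Abstract form of Corollary 4.2: a shift Harnack inequality
`ν(A)^p ≤ e^{C|y|²} ν(A - y)` (with `A - y = {a - y : a ∈ A} = (·+y)⁻¹(A)`) for a Borel
probability measure `ν` on `ℝ^d` implies that `ν` is absolutely continuous with respect to
the Lebesgue measure (hence has a density). -/
theorem stmt_19 {d : ℕ} (ν : Measure (EuclideanSpace ℝ (Fin d))) [IsProbabilityMeasure ν]
    (p C : ℝ) (hp : 1 < p) (hC : 0 ≤ C)
    (hShift : ∀ A : Set (EuclideanSpace ℝ (Fin d)), MeasurableSet A →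
      ∀ y : EuclideanSpace ℝ (Fin d),
        (ν A).toReal ^ p ≤ Real.exp (C * ‖y‖ ^ 2) * (ν ((· + y) ⁻¹' A)).toReal) :
    ν ≪ (volume : Measure (EuclideanSpace ℝ (Fin d))) := by
  refine Measure.AbsolutelyContinuous.mk fun A hA hA0 => ?_
  have key : ∫⁻ y, ν ((· + y) ⁻¹' A) ∂(volume : Measure (EuclideanSpace ℝ (Fin d))) = 0 := by
    have h1 : ∀ y : EuclideanSpace ℝ (Fin d),
        ν ((· + y) ⁻¹' A) = ∫⁻ x, A.indicator 1 (x + y) ∂ν := by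
      intro y
      rw [← lintegral_indicator_one (hA.preimage (measurable_add_const y))]
      congr 1
    have hmeas : Measurable (fun q : (EuclideanSpace ℝ (Fin d)) × (EuclideanSpace ℝ (Fin d)) =>
        A.indicator (1 : EuclideanSpace ℝ (Fin d) → ENNReal) (q.2 + q.1)) :=
      (measurable_const.indicator hA).comp (measurable_snd.add measurable_fst)
    calc ∫⁻ y, ν ((· + y) ⁻¹' A) ∂(volume : Measure (EuclideanSpace ℝ (Fin d)))
        = ∫⁻ y, ∫⁻ x, A.indicator 1 (x + y) ∂ν ∂volume := by simp_rw [h1]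
      _ = ∫⁻ x, ∫⁻ y, A.indicator 1 (x + y) ∂volume ∂ν :=
          lintegral_lintegral_swap hmeas.aemeasurable
      _ = ∫⁻ x, volume ((x + ·) ⁻¹' A) ∂ν := by
          congr 1; ext x
          rw [← lintegral_indicator_one (hA.preimage (measurable_const_add x))]
          congr 1
      _ = 0 := by
          simp only [measure_preimage_add, hA0]
          simp
  have hmeas2 : Measurable (fun q : (EuclideanSpace ℝ (Fin d)) × (EuclideanSpace ℝ (Fin d)) =>
      A.indicator (1 : EuclideanSpace ℝ (Fin d) → ENNReal) (q.2 + q.1)) :=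
    (measurable_const.indicator hA).comp (measurable_snd.add measurable_fst)
  have hmν : Measurable fun y : EuclideanSpace ℝ (Fin d) => ν ((· + y) ⁻¹' A) := by
    have : (fun y : EuclideanSpace ℝ (Fin d) => ν ((· + y) ⁻¹' A))
        = fun y => ∫⁻ x, A.indicator 1 (x + y) ∂ν := by
      funext y
      rw [← lintegral_indicator_one (hA.preimage (measurable_add_const y))]
      congr 1
    rw [this]
    exact hmeas2.lintegral_prod_right'
  have hae := (lintegral_eq_zero_iff hmν).mp key
  obtain ⟨y, hy⟩ := hae.exists
  have hy' : ν ((· + y) ⁻¹' A) = 0 := hy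
  have h := hShift A hA y
  rw [hy'] at h
  simp only [ENNReal.toReal_zero, mul_zero] at h
  have h0 : (ν A).toReal = 0 := by
    by_contra hne
    have hpos : 0 < (ν A).toReal := lt_of_le_of_ne ENNReal.toReal_nonneg (Ne.symm hne)
    have := Real.rpow_pos_of_pos hpos p
    linarith
  have : ν A ≠ ⊤ := measure_ne_top ν A
  exact (ENNReal.toReal_eq_zero_iff _).mp h0 |>.resolve_right this
end
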